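/- arXiv:1004.3931 — 3 statements merged into one kernel-verified Lean document; each statement's English description precedes it below -/
import Mathlib

section
/- Let λ₁,…,λ_k be nonzero complex numbers, let Λ := max_j |λ_j| and c := 1/(2Λ). For every a = (a₁,…,a_k) ∈ ℂᵏ with 0 < ‖a‖ < 1 (where ‖a‖ := max_j |a_j|), define τ : 𝔻 → ℂᵏ by τ(ξ) := (a₁·exp(−c·(log‖a‖)·λ₁·ξ), …, a_k·exp(−c·(log‖a‖)·λ_k·ξ)). Then τ is holomorphic, τ(0) = a, τ maps the unit disc 𝔻 into the open unit polydisc 𝔻ᵏ = {z : |z_j| < 1 for all j}, τ satisfies the differential equation τ′(ξ) = −c·(log‖a‖)·F(τ(ξ)) where F(z) := (λ₁z₁,…,λ_k z_k) (so the image of τ lies in the integral curve of the generic linear vector field F through a), and ‖τ′(0)‖ ≥ c·(min_j |λ_j|)·‖a‖·|log‖a‖|. -/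
/-!
Each coordinate of `τ` is an exponential, so `τ` is entire and solves `τ' = s • (l * τ)` with
`s = -c log ‖a‖`. Since `‖s‖ ‖l j‖ ≤ c Λ |log ‖a‖| = |log ‖a‖| / 2`, on the unit disc
`|τ_j(ξ)| ≤ ‖a‖ exp (-log ‖a‖ / 2) = √‖a‖ < 1`. Finally `τ'(0) = s • (l * a)`, and the sup norm
of `l * a` is at least `min_j |l j|` times that of `a`, read off at a coordinate where `|a j|`
is maximal.
-/

open Metric

theorem mul_exp_neg_log_div_two_lt_one {x : ℝ} (hx0 : 0 ≤ x) (hx1 : x < 1) :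
    x * Real.exp (-Real.log x / 2) < 1 := by
  rcases hx0.eq_or_lt with rfl | hx0
  · simp
  have hlog : Real.log x < 0 := Real.log_neg hx0 hx1
  rw [← Real.exp_log hx0, Real.log_exp, ← Real.exp_add, Real.exp_lt_one_iff]
  linarith

section

variable {ι : Type*}

theorem hasDerivAt_pi_mul_cexp_mul [Fintype ι] (a l : ι → ℂ) (s ξ : ℂ) :
    HasDerivAt (fun ξ j => a j * Complex.exp (s * l j * ξ))
      (fun j => s * (l j * (a j * Complex.exp (s * l j * ξ)))) ξ :=
  hasDerivAt_pi.2 fun j =>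
    (((hasDerivAt_const_mul (s * l j)).cexp).const_mul (a j)).congr_deriv (by ring)

theorem norm_mul_cexp_mul_le (a l s ξ : ℂ) :
    ‖a * Complex.exp (s * l * ξ)‖ ≤ ‖a‖ * Real.exp (‖s‖ * ‖l‖ * ‖ξ‖) := by
  rw [norm_mul, Complex.norm_exp, ← norm_mul, ← norm_mul]
  gcongr
  exact Complex.re_le_norm _

theorem iInf_norm_mul_norm_le_norm_mul {𝕜 : Type*} [NormedDivisionRing 𝕜] [Fintype ι]
    (u v : ι → 𝕜) : (⨅ j, ‖u j‖) * ‖v‖ ≤ ‖u * v‖ := by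
  rcases isEmpty_or_nonempty ι with hι | hι
  · simp [Subsingleton.elim v 0]
  obtain ⟨j, -, hj⟩ := Finset.univ.exists_mem_eq_sup Finset.univ_nonempty fun j => ‖v j‖₊
  have hvj : ‖v‖ = ‖v j‖ := congrArg NNReal.toReal ((Pi.nnnorm_def v).trans hj)
  calc (⨅ j, ‖u j‖) * ‖v‖ ≤ ‖u j‖ * ‖v j‖ := by
        rw [hvj]
        gcongr
        exact ciInf_le (Set.finite_range _).bddBelow j
    _ = ‖(u * v) j‖ := (norm_mul _ _).symm
    _ ≤ ‖u * v‖ := norm_le_pi_norm _ j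

theorem norm_mul_cexp_mul_lt_one [Fintype ι] {a l : ι → ℂ} {s ξ : ℂ} (ha : ‖a‖ < 1)
    (hξ : ‖ξ‖ < 1) (hsl : ∀ j, ‖s‖ * ‖l j‖ ≤ -Real.log ‖a‖ / 2) (j : ι) :
    ‖a j * Complex.exp (s * l j * ξ)‖ < 1 :=
  calc ‖a j * Complex.exp (s * l j * ξ)‖ ≤ ‖a j‖ * Real.exp (‖s‖ * ‖l j‖ * ‖ξ‖) :=
        norm_mul_cexp_mul_le _ _ _ _
    _ ≤ ‖a‖ * Real.exp (-Real.log ‖a‖ / 2) := by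
        gcongr
        · exact norm_le_pi_norm a j
        · exact (mul_le_of_le_one_right (by positivity) hξ.le).trans (hsl j)
    _ < 1 := mul_exp_neg_log_div_two_lt_one (norm_nonneg a) ha

end

theorem holomorphic_disc_in_leaf_of_generic_linear_vector_field_general
    (k : ℕ) (l : Fin k → ℂ)
    (Λ c : ℝ) (hΛ : Λ = ⨆ j, ‖l j‖) (hc : c = 1 / (2 * Λ))
    (a : Fin k → ℂ) (ha1 : ‖a‖ < 1)
    (τ : ℂ → Fin k → ℂ)
    (hτ : τ = fun ξ j => a j * Complex.exp (-(c * Real.log ‖a‖) * l j * ξ)) :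
    Differentiable ℂ τ ∧
    τ 0 = a ∧
    (∀ ξ ∈ ball (0 : ℂ) 1, ∀ j, ‖τ ξ j‖ < 1) ∧
    (∀ ξ : ℂ, deriv τ ξ = fun j => -(c * Real.log ‖a‖) * (l j * τ ξ j)) ∧
    c * (⨅ j, ‖l j‖) * ‖a‖ * |Real.log ‖a‖| ≤ ‖deriv τ 0‖ := by
  have hΛ0 : 0 ≤ Λ := hΛ ▸ Real.iSup_nonneg fun j => norm_nonneg (l j)
  have hc0 : 0 ≤ c := hc ▸ by positivity
  have hcl : ∀ j, c * ‖l j‖ ≤ 1 / 2 := fun j => by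
    have hlΛ : ‖l j‖ ≤ Λ := hΛ ▸ le_ciSup (f := fun j => ‖l j‖) (Set.finite_range _).bddAbove j
    rw [hc, one_div_mul_eq_div]
    exact div_le_of_le_mul₀ (by positivity) (by norm_num) (by linarith)
  have hlog : Real.log ‖a‖ ≤ 0 := Real.log_nonpos (norm_nonneg a) ha1.le
  set s : ℂ := -(c * Real.log ‖a‖) with hs_def
  have hs : ‖s‖ = c * |Real.log ‖a‖| := by
    rw [hs_def, norm_neg, norm_mul, Complex.norm_real, Complex.norm_real, Real.norm_eq_abs,
      Real.norm_eq_abs, abs_of_nonneg hc0]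
  have hder : ∀ ξ, HasDerivAt τ (fun j => s * (l j * τ ξ j)) ξ := fun ξ =>
    hτ ▸ hasDerivAt_pi_mul_cexp_mul a l s ξ
  have hτ0 : τ 0 = a := by simp [hτ]
  refine ⟨fun ξ => (hder ξ).differentiableAt, hτ0, fun ξ hξ j => ?_, fun ξ => (hder ξ).deriv, ?_⟩
  · have hsl : ∀ j, ‖s‖ * ‖l j‖ ≤ -Real.log ‖a‖ / 2 := fun j => by
      rw [hs, abs_of_nonpos hlog]
      nlinarith [hcl j, neg_nonneg.2 hlog]
    exact hτ ▸ norm_mul_cexp_mul_lt_one ha1 (mem_ball_zero_iff.1 hξ) hsl j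
  · rw [(hder 0).deriv, hτ0]
    calc c * (⨅ j, ‖l j‖) * ‖a‖ * |Real.log ‖a‖| = ‖s‖ * ((⨅ j, ‖l j‖) * ‖a‖) := by
          rw [hs]; ring
      _ ≤ ‖s‖ * ‖l * a‖ := by gcongr; exact iInf_norm_mul_norm_le_norm_mul l a
      _ = ‖s • (l * a)‖ := (norm_smul s _).symm

/-- Lemma 4.3: for the generic linear vector field
`F(z) = (λ₁z₁, …, λ_k z_k)` with all `λ_j ≠ 0`, `Λ := max |λ_j|`, `c := 1/(2Λ)`, and any
`a` with `0 < ‖a‖ < 1` (sup norm), the map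
`τ(ξ) := (a_j · exp(−c·log‖a‖·λ_j·ξ))_j` is holomorphic, sends `0` to `a`, maps the unit
disc into the unit polydisc, solves `τ′ = −c·log‖a‖·F(τ)`, and satisfies
`‖τ′(0)‖ ≥ c·(min_j |λ_j|)·‖a‖·|log‖a‖|`. -/
theorem holomorphic_disc_in_leaf_of_generic_linear_vector_field
    (k : ℕ) (hk : 1 ≤ k) (l : Fin k → ℂ) (hl : ∀ j, l j ≠ 0)
    (Λ c : ℝ) (hΛ : Λ = ⨆ j, ‖l j‖) (hc : c = 1 / (2 * Λ))
    (a : Fin k → ℂ) (ha0 : 0 < ‖a‖) (ha1 : ‖a‖ < 1)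
    (τ : ℂ → Fin k → ℂ)
    (hτ : τ = fun ξ j => a j * Complex.exp (-(c * Real.log ‖a‖) * l j * ξ)) :
    Differentiable ℂ τ ∧
    τ 0 = a ∧
    (∀ ξ ∈ ball (0 : ℂ) 1, ∀ j, ‖τ ξ j‖ < 1) ∧
    (∀ ξ : ℂ, deriv τ ξ = fun j => -(c * Real.log ‖a‖) * (l j * τ ξ j)) ∧
    c * (⨅ j, ‖l j‖) * ‖a‖ * |Real.log ‖a‖| ≤ ‖deriv τ 0‖ :=
  holomorphic_disc_in_leaf_of_generic_linear_vector_field_general k l Λ c hΛ hc a ha1 τ hτ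
end

section
/- There is a constant C > 0 such that for every r ∈ [1/2, 1), with R := log((1+r)/(1−r)) and M_R := ∫_𝔻 log⁺(r/|ζ|)·4/(1−|ζ|²)² dA(ζ), and for every measurable function u : 𝔻 → [0,1], one has | (1/M_R)·∫_{|ζ|<r} log(r/|ζ|)·u(ζ)·4/(1−|ζ|²)² dA(ζ) − (1/M_R)·∫_{|ζ|<r} log(1/|ζ|)·u(ζ)·4/(1−|ζ|²)² dA(ζ) | ≤ C/R. -/
/-!
On the punctured disc the two weights differ by the constant `log r`, so the difference of the
two averages is `log r / M_R` times the integral of `u` against the Poincaré density over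
`{|ζ| < r}`. That Poincaré area is `4πr² / (1 - r²)` while `|log r| ≤ (1 - r) / r`, so the
numerator is at most `2π`. Integrating by parts in polar coordinates gives exactly
`M_R = -2π log (1 - r²)`, and `R = -log (1 - r²) + 2 log (1 + r) ≤ -9 log (1 - r²)` once `r ≥ 1/2`.
-/

open MeasureTheory Real Set

namespace Complex

theorem setIntegral_ball_fun_norm (g : ℝ → ℝ) {r : ℝ} (hr : 0 ≤ r) :
    ∫ ζ in Metric.ball (0 : ℂ) r, g ‖ζ‖ = 2 * π * ∫ s in (0)..r, s * g s := by
  have hind : (Metric.ball (0 : ℂ) r).indicator (fun ζ => g ‖ζ‖)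
      = fun ζ => (Iio r).indicator g ‖ζ‖ := by
    ext ζ
    simp [indicator]
  have hpow (s : ℝ) :
      s ^ (2 - 1) • (Iio r).indicator g s = (Iio r).indicator (fun s => s * g s) s := by
    by_cases hs : s < r <;> simp [hs]
  rw [← integral_indicator measurableSet_ball, hind, integral_fun_norm_addHaar,
    finrank_real_complex, measureReal_def, volume_ball, intervalIntegral.integral_of_le hr,
    integral_Ioc_eq_integral_Ioo, ← Ioi_inter_Iio]
  simp only [hpow, setIntegral_indicator measurableSet_Iio, ENNReal.ofReal_one, one_pow, one_mul,
    ENNReal.coe_toReal, NNReal.coe_real_pi, smul_eq_mul, nsmul_eq_mul, Nat.cast_ofNat]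
  ring

theorem integrableOn_ball_fun_norm {g : ℝ → ℝ} {r : ℝ}
    (hg : ContinuousOn (fun s => s * g s) (Icc 0 r)) :
    IntegrableOn (fun ζ : ℂ => g ‖ζ‖) (Metric.ball 0 r) := by
  rw [integrableOn_fun_norm_addHaar, finrank_real_complex]
  simpa using hg.integrableOn_Icc.mono_set Ioo_subset_Icc_self

end Complex

theorem continuousOn_poincare_density {r : ℝ} (hr1 : r < 1) :
    ContinuousOn (fun s : ℝ => 4 / (1 - s ^ 2) ^ 2) (Icc 0 r) :=
  continuousOn_const.div (by fun_prop) fun s hs => by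
    have : s ^ 2 < 1 := by nlinarith [hs.1, hs.2]
    positivity

theorem integral_mul_poincare_density {r : ℝ} (hr0 : 0 ≤ r) (hr1 : r < 1) :
    ∫ s in (0)..r, s * (4 / (1 - s ^ 2) ^ 2) = 2 * r ^ 2 / (1 - r ^ 2) := by
  have hpos : ∀ s ∈ uIcc 0 r, 0 < 1 - s ^ 2 := by
    intro s hs
    rw [uIcc_of_le hr0] at hs
    nlinarith [hs.1, hs.2]
  have hderiv : ∀ s ∈ uIcc 0 r,
      HasDerivAt (fun s => 2 * s ^ 2 / (1 - s ^ 2)) (s * (4 / (1 - s ^ 2) ^ 2)) s := by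
    intro s hs
    refine (((hasDerivAt_pow 2 s).const_mul 2).div ((hasDerivAt_pow 2 s).const_sub 1)
      (hpos s hs).ne').congr_deriv ?_
    field_simp
    ring
  have hcont : ContinuousOn (fun s : ℝ => s * (4 / (1 - s ^ 2) ^ 2)) (uIcc 0 r) :=
    continuousOn_id.mul (continuousOn_poincare_density hr1 |>.mono (uIcc_of_le hr0).subset)
  rw [intervalIntegral.integral_eq_sub_of_hasDerivAt hderiv hcont.intervalIntegrable]
  simp

/-- The antiderivative `2 s² log (r / s) / (1 - s²) - log (1 - s²)` is written with `s * log s`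
so that its continuity at `s = 0` is visible. -/
theorem integral_mul_log_div_mul_poincare_density {r : ℝ} (hr0 : 0 < r) (hr1 : r < 1) :
    ∫ s in (0)..r, s * (log (r / s) * (4 / (1 - s ^ 2) ^ 2)) = -log (1 - r ^ 2) := by
  set G : ℝ → ℝ := fun s => 2 * (s ^ 2 * log r - s * (s * log s)) / (1 - s ^ 2) - log (1 - s ^ 2)
  have hpos : ∀ s ∈ Icc 0 r, 0 < 1 - s ^ 2 := fun s hs => by nlinarith [hs.1, hs.2]
  have hcont : ContinuousOn G (Icc 0 r) :=
    (ContinuousOn.div (by fun_prop) (by fun_prop) fun s hs => (hpos s hs).ne').sub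
      (ContinuousOn.log (by fun_prop) fun s hs => (hpos s hs).ne')
  have hderiv : ∀ s ∈ Ioo 0 r, HasDerivAt G (s * (log (r / s) * (4 / (1 - s ^ 2) ^ 2))) s := by
    intro s hs
    have h1 := hpos s (Ioo_subset_Icc_self hs)
    have hden : HasDerivAt (fun s : ℝ => 1 - s ^ 2) (-(2 * s)) s :=
      ((hasDerivAt_pow 2 s).const_sub 1).congr_deriv (by ring)
    have hnum : HasDerivAt (fun s : ℝ => s ^ 2 * log r - s * (s * log s))
        (2 * s * log r - (s * log s + s * (log s + 1))) s :=
      (((hasDerivAt_pow 2 s).mul_const (log r)).sub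
        ((hasDerivAt_id' s).mul (hasDerivAt_mul_log hs.1.ne'))).congr_deriv (by ring)
    refine (((hnum.const_mul 2).div hden h1.ne').sub (hden.log h1.ne')).congr_deriv ?_
    rw [log_div hr0.ne' hs.1.ne']
    field_simp
    ring
  have hnonneg : ∀ s ∈ Ioo 0 r, 0 ≤ s * (log (r / s) * (4 / (1 - s ^ 2) ^ 2)) := fun s hs =>
    mul_nonneg hs.1.le (mul_nonneg (log_nonneg ((one_le_div hs.1).2 hs.2.le)) (by positivity))
  rw [intervalIntegral.integral_eq_sub_of_hasDerivAt_of_le hr0.le hcont hderiv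
    ((intervalIntegrable_iff_integrableOn_Ioc_of_le hr0.le).2
      (intervalIntegral.integrableOn_deriv_of_nonneg hcont hderiv hnonneg))]
  have hG : r ^ 2 * log r - r * (r * log r) = 0 := by ring
  simp [G, hG]

theorem integral_ball_poincare_density {r : ℝ} (hr0 : 0 ≤ r) (hr1 : r < 1) :
    ∫ ζ in Metric.ball (0 : ℂ) r, 4 / (1 - ‖ζ‖ ^ 2) ^ 2 = 4 * π * r ^ 2 / (1 - r ^ 2) := by
  rw [Complex.setIntegral_ball_fun_norm (fun s => 4 / (1 - s ^ 2) ^ 2) hr0,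
    integral_mul_poincare_density hr0 hr1]
  ring

theorem max_log_div_norm_zero_eq_indicator {r : ℝ} (hr : 0 < r) (ζ : ℂ) :
    max (log (r / ‖ζ‖)) 0 = (Metric.ball (0 : ℂ) r).indicator (fun ζ => log (r / ‖ζ‖)) ζ := by
  by_cases hζ : ‖ζ‖ < r
  · rw [indicator_of_mem (mem_ball_zero_iff.2 hζ), max_eq_left]
    rcases (norm_nonneg ζ).eq_or_lt with h0 | h0
    · simp [← h0]
    · exact log_nonneg ((one_le_div h0).2 hζ.le)
  · rw [indicator_of_notMem (mt mem_ball_zero_iff.1 hζ), max_eq_right]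
    exact log_nonpos (by positivity) (div_le_one_of_le₀ (not_lt.1 hζ) (norm_nonneg ζ))

theorem integral_ball_one_max_log_div_mul_poincare_density {r : ℝ} (hr0 : 0 < r) (hr1 : r < 1) :
    ∫ ζ in Metric.ball (0 : ℂ) 1, max (log (r / ‖ζ‖)) 0 * (4 / (1 - ‖ζ‖ ^ 2) ^ 2)
      = 2 * π * -log (1 - r ^ 2) := by
  simp_rw [max_log_div_norm_zero_eq_indicator hr0,
    ← indicator_mul_left _ _ fun ζ : ℂ => 4 / (1 - ‖ζ‖ ^ 2) ^ 2]
  rw [setIntegral_indicator measurableSet_ball,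
    inter_eq_right.2 (Metric.ball_subset_ball hr1.le),
    Complex.setIntegral_ball_fun_norm (fun s => log (r / s) * (4 / (1 - s ^ 2) ^ 2)) hr0.le,
    integral_mul_log_div_mul_poincare_density hr0 hr1]

theorem integrableOn_ball_poincare_density {r : ℝ} (hr1 : r < 1) :
    IntegrableOn (fun ζ : ℂ => 4 / (1 - ‖ζ‖ ^ 2) ^ 2) (Metric.ball 0 r) :=
  Complex.integrableOn_ball_fun_norm (continuousOn_id.mul (continuousOn_poincare_density hr1))

theorem integrableOn_ball_mul_poincare_density {r C : ℝ} (hr1 : r < 1) {u : ℂ → ℝ}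
    (hu : Measurable u) (hC : ∀ ζ, ‖u ζ‖ ≤ C) :
    IntegrableOn (fun ζ => u ζ * (4 / (1 - ‖ζ‖ ^ 2) ^ 2)) (Metric.ball 0 r) :=
  (integrableOn_ball_poincare_density hr1).bdd_mul hu.aestronglyMeasurable (ae_of_all _ hC)

theorem integrableOn_ball_log_one_div_norm_mul_poincare_density {r C : ℝ} (hr1 : r < 1)
    {u : ℂ → ℝ} (hu : Measurable u) (hC : ∀ ζ, ‖u ζ‖ ≤ C) :
    IntegrableOn (fun ζ => log (1 / ‖ζ‖) * (u ζ * (4 / (1 - ‖ζ‖ ^ 2) ^ 2))) (Metric.ball 0 r) := by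
  have hlog : IntegrableOn (fun ζ : ℂ => log ‖ζ‖ * (4 / (1 - ‖ζ‖ ^ 2) ^ 2)) (Metric.ball 0 r) :=
    Complex.integrableOn_ball_fun_norm (g := fun s => log s * (4 / (1 - s ^ 2) ^ 2)) <|
      (continuous_mul_log.continuousOn.mul (continuousOn_poincare_density hr1)).congr
        fun _ _ => (mul_assoc _ _ _).symm
  refine (hlog.neg.bdd_mul hu.aestronglyMeasurable (ae_of_all _ hC)).congr (ae_of_all _ fun ζ => ?_)
  simp only [Pi.neg_apply, one_div, log_inv]
  ring

theorem setIntegral_log_div_norm_mul_sub {r : ℝ} (hr : 0 < r) {s : Set ℂ} {f : ℂ → ℝ}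
    (hf : IntegrableOn f s) (hlogf : IntegrableOn (fun ζ => log (1 / ‖ζ‖) * f ζ) s) :
    (∫ ζ in s, log (r / ‖ζ‖) * f ζ) - ∫ ζ in s, log (1 / ‖ζ‖) * f ζ
      = log r * ∫ ζ in s, f ζ := by
  have hsplit : ∫ ζ in s, log (r / ‖ζ‖) * f ζ
      = ∫ ζ in s, (log r * f ζ + log (1 / ‖ζ‖) * f ζ) := by
    refine integral_congr_ae (ae_restrict_of_ae ?_)
    filter_upwards [Measure.ae_ne volume 0] with ζ hζ
    rw [log_div hr.ne' (norm_ne_zero_iff.2 hζ), one_div, log_inv]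
    ring
  rw [hsplit, integral_add (hf.const_mul _) hlogf, integral_const_mul]
  ring

theorem neg_log_mul_poincare_area_le {r : ℝ} (hr0 : 0 < r) (hr1 : r < 1) :
    -log r * (4 * π * r ^ 2 / (1 - r ^ 2)) ≤ 2 * π := by
  have hlog : -log r ≤ 1 / r - 1 := by
    simpa [log_inv] using log_le_sub_one_of_pos (inv_pos.2 hr0)
  have hr2 : 0 < 1 - r ^ 2 := by nlinarith
  calc -log r * (4 * π * r ^ 2 / (1 - r ^ 2))
      ≤ (1 / r - 1) * (4 * π * r ^ 2 / (1 - r ^ 2)) := by gcongr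
    _ = 2 * π * (2 * r / (1 + r)) := by field_simp; ring
    _ ≤ 2 * π := by
      rw [mul_le_iff_le_one_right (by positivity), div_le_one (by positivity)]
      linarith

theorem abs_log_mul_setIntegral_ball_poincare_le {r : ℝ} (hr0 : 0 < r) (hr1 : r < 1)
    {u : ℂ → ℝ} (hu : Measurable u) (hu01 : ∀ ζ, u ζ ∈ Icc (0 : ℝ) 1) :
    |log r * ∫ ζ in Metric.ball (0 : ℂ) r, u ζ * (4 / (1 - ‖ζ‖ ^ 2) ^ 2)| ≤ 2 * π := by
  have hI0 : 0 ≤ ∫ ζ in Metric.ball (0 : ℂ) r, u ζ * (4 / (1 - ‖ζ‖ ^ 2) ^ 2) :=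
    setIntegral_nonneg measurableSet_ball fun ζ _ => mul_nonneg (hu01 ζ).1 (by positivity)
  have hI : ∫ ζ in Metric.ball (0 : ℂ) r, u ζ * (4 / (1 - ‖ζ‖ ^ 2) ^ 2)
      ≤ 4 * π * r ^ 2 / (1 - r ^ 2) := by
    rw [← integral_ball_poincare_density hr0.le hr1]
    refine setIntegral_mono_on ?_ (integrableOn_ball_poincare_density hr1) measurableSet_ball
      fun ζ _ => mul_le_of_le_one_left (by positivity) (hu01 ζ).2
    exact integrableOn_ball_mul_poincare_density hr1 hu fun ζ =>
      abs_le.2 ⟨by linarith [(hu01 ζ).1], (hu01 ζ).2⟩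
  rw [abs_mul, abs_of_nonpos (log_nonpos hr0.le hr1.le), abs_of_nonneg hI0]
  calc -log r * ∫ ζ in Metric.ball (0 : ℂ) r, u ζ * (4 / (1 - ‖ζ‖ ^ 2) ^ 2)
      ≤ -log r * (4 * π * r ^ 2 / (1 - r ^ 2)) := by
        gcongr
        exact neg_nonneg.2 (log_nonpos hr0.le hr1.le)
    _ ≤ 2 * π := neg_log_mul_poincare_area_le hr0 hr1

theorem log_one_add_div_one_sub_le {r : ℝ} (hr2 : 1 / 2 ≤ r) (hr1 : r < 1) :
    log ((1 + r) / (1 - r)) ≤ 9 * -log (1 - r ^ 2) := by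
  have h1 : log (1 + r) ≤ r := by linarith [log_le_sub_one_of_pos (by linarith : 0 < 1 + r)]
  have h2 : log (1 - r ^ 2) ≤ -r ^ 2 := by
    linarith [log_le_sub_one_of_pos (by nlinarith : 0 < 1 - r ^ 2)]
  have h3 : log (1 - r ^ 2) = log (1 - r) + log (1 + r) := by
    rw [← log_mul (by linarith) (by linarith)]
    ring_nf
  rw [log_div (by linarith) (by linarith)]
  nlinarith

/-- for `r ∈ [1/2,1)`, `R = log((1+r)/(1−r))`,
`M_R = ∫_𝔻 log⁺(r/|ζ|)·4/(1−|ζ|²)² dA`, and any measurable `u : 𝔻 → [0,1]`, the averages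
of `u` with weights `log(r/|ζ|)` and `log(1/|ζ|)` over `{|ζ|<r}` differ by at most `C/R`
for a universal constant `C`. -/
theorem comparison_B_R_and_D_R : ∃ C > 0, ∀ r : ℝ, 1/2 ≤ r → r < 1 →
    ∀ R M : ℝ, R = Real.log ((1 + r) / (1 - r)) →
    M = (∫ ζ in Metric.ball (0 : ℂ) 1,
      max (Real.log (r / ‖ζ‖)) 0 * (4 / (1 - ‖ζ‖ ^ 2) ^ 2)) →
    ∀ u : ℂ → ℝ, Measurable u → (∀ ζ, u ζ ∈ Set.Icc (0:ℝ) 1) →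
    |(1 / M) * (∫ ζ in Metric.ball (0 : ℂ) r,
        Real.log (r / ‖ζ‖) * u ζ * (4 / (1 - ‖ζ‖ ^ 2) ^ 2))
      - (1 / M) * (∫ ζ in Metric.ball (0 : ℂ) r,
        Real.log (1 / ‖ζ‖) * u ζ * (4 / (1 - ‖ζ‖ ^ 2) ^ 2))|
      ≤ C / R := by
  refine ⟨9, by norm_num, fun r hr2 hr1 R M hR hM u hu hu01 => ?_⟩
  have hr0 : 0 < r := by linarith
  have hu1 : ∀ ζ, ‖u ζ‖ ≤ 1 := fun ζ => abs_le.2 ⟨by linarith [(hu01 ζ).1], (hu01 ζ).2⟩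
  have hL : 0 < -log (1 - r ^ 2) := neg_pos.2 (log_neg (by nlinarith) (by nlinarith))
  have hR0 : 0 < R := hR ▸ log_pos ((one_lt_div (by linarith)).2 (by linarith))
  simp only [mul_assoc (log _)]
  rw [← mul_sub, setIntegral_log_div_norm_mul_sub hr0
      (integrableOn_ball_mul_poincare_density hr1 hu hu1)
      (integrableOn_ball_log_one_div_norm_mul_poincare_density hr1 hu hu1),
    hM, integral_ball_one_max_log_div_mul_poincare_density hr0 hr1, abs_mul,
    abs_of_pos (by positivity)]
  calc 1 / (2 * π * -log (1 - r ^ 2))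
        * |log r * ∫ ζ in Metric.ball (0 : ℂ) r, u ζ * (4 / (1 - ‖ζ‖ ^ 2) ^ 2)|
      ≤ 1 / (2 * π * -log (1 - r ^ 2)) * (2 * π) :=
        mul_le_mul_of_nonneg_left (abs_log_mul_setIntegral_ball_poincare_le hr0 hr1 hu hu01)
          (by positivity)
    _ = 1 / -log (1 - r ^ 2) := by field_simp
    _ ≤ 9 / R := by
      rw [div_le_div_iff₀ hL hR0, hR]
      linarith [log_one_add_div_one_sub_le hr2 hr1]
end

section
/- There is a constant C > 0 such that for every R ≥ 3, setting R′ := R − √(2R·log R), and for every ρ with 0 ≤ ρ ≤ R′, one has ∫_R^∞ t^{−1/2}·exp(−(√t/2 − ρ/(2√t))²) dt ≤ C·(log R)^{−1/2}·exp(−(R−R′)²/(4R)) = C·R^{−1/2}·(log R)^{−1/2}. -/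
open MeasureTheory Real

/-!
Write `w(t) = √t/2 − ρ/(2√t)`. Then `w' = (1 + ρ/t)/(4√t) ≥ 1/(4√t)`, and on `[R, ∞)` one has
`w ≥ w_{R'}(R) = √((log R)/2) =: a`, since `w` increases in `t` and decreases in `ρ`. Hence the
integrand is at most `4 w' e^{−w²} ≤ (2/a) · 2 w w' e^{−w²} = (2/a) · (−e^{−w²})'`, whose integral
over `(R, ∞)` is `(2/a) e^{−w(R)²} ≤ (2/a) e^{−a²} = 2√2 (log R)^{−1/2} R^{−1/2}`.
-/

open Set Filter Topology

section GaussianTail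

variable {f f' : ℝ → ℝ} {R a : ℝ}

theorem hasDerivAt_neg_exp_neg_sq {t : ℝ} (hf : HasDerivAt f (f' t) t) :
    HasDerivAt (fun x => -exp (-f x ^ 2)) (2 * f t * f' t * exp (-f t ^ 2)) t := by
  refine ((hf.fun_pow 2).fun_neg.exp.fun_neg).congr_deriv ?_
  push_cast
  ring

theorem integrableOn_and_integral_Ioi_deriv_neg_exp_neg_sq
    (hf : ∀ t ∈ Ici R, HasDerivAt f (f' t) t) (hf_nonneg : ∀ t ∈ Ioi R, 0 ≤ f t)
    (hf' : ∀ t ∈ Ioi R, 0 ≤ f' t) (hf_top : Tendsto f atTop atTop) :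
    IntegrableOn (fun t => 2 * f t * f' t * exp (-f t ^ 2)) (Ioi R) ∧
      ∫ t in Ioi R, 2 * f t * f' t * exp (-f t ^ 2) = exp (-f R ^ 2) := by
  have hderiv (t) (ht : t ∈ Ici R) := hasDerivAt_neg_exp_neg_sq (hf t ht)
  have hpos : ∀ t ∈ Ioi R, 0 ≤ 2 * f t * f' t * exp (-f t ^ 2) := fun t ht => by
    have := hf_nonneg t ht
    have := hf' t ht
    positivity
  have hlim : Tendsto (fun x => -exp (-f x ^ 2)) atTop (𝓝 (-0)) :=
    (tendsto_exp_atBot.comp (tendsto_neg_atTop_atBot.comp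
      (tendsto_pow_atTop two_ne_zero |>.comp hf_top))).neg
  refine ⟨integrableOn_Ioi_deriv_of_nonneg' hderiv hpos hlim, ?_⟩
  rw [integral_Ioi_of_hasDerivAt_of_nonneg' hderiv hpos hlim]
  ring

theorem aestronglyMeasurable_deriv_mul_exp_neg_sq (hf : ∀ t ∈ Ici R, HasDerivAt f (f' t) t) :
    AEStronglyMeasurable (fun t => f' t * exp (-f t ^ 2)) (volume.restrict (Ioi R)) := by
  have hf'_eq : deriv f =ᵐ[volume.restrict (Ioi R)] f' :=
    (ae_restrict_mem measurableSet_Ioi).mono fun t ht => (hf t (mem_Ici_of_Ioi ht)).deriv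
  have hcont : ContinuousOn f (Ioi R) := fun t ht =>
    (hf t (mem_Ici_of_Ioi ht)).continuousAt.continuousWithinAt
  exact ((measurable_deriv f).aestronglyMeasurable.congr hf'_eq).mul
    (continuous_exp.comp_aestronglyMeasurable
      ((hcont.aestronglyMeasurable measurableSet_Ioi).pow 2).neg)

/-- This is `∫_{f(R)}^∞ e^{-w²} dw ≤ e^{-a²}/(2a)` after the substitution `w = f(t)`. -/
theorem integrableOn_and_integral_Ioi_deriv_mul_exp_neg_sq_le (ha : 0 < a)
    (hf : ∀ t ∈ Ici R, HasDerivAt f (f' t) t) (hf' : ∀ t ∈ Ioi R, 0 ≤ f' t)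
    (hfa : ∀ t ∈ Ici R, a ≤ f t) (hf_top : Tendsto f atTop atTop) :
    IntegrableOn (fun t => f' t * exp (-f t ^ 2)) (Ioi R) ∧
      ∫ t in Ioi R, f' t * exp (-f t ^ 2) ≤ exp (-a ^ 2) / (2 * a) := by
  obtain ⟨hint, hval⟩ := integrableOn_and_integral_Ioi_deriv_neg_exp_neg_sq hf
    (fun t ht => ha.le.trans (hfa t (mem_Ici_of_Ioi ht))) hf' hf_top
  have hle : ∀ t ∈ Ioi R,
      f' t * exp (-f t ^ 2) ≤ (2 * a)⁻¹ * (2 * f t * f' t * exp (-f t ^ 2)) := fun t ht => by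
    have hft := hfa t (mem_Ici_of_Ioi ht)
    have := hf' t ht
    rw [show (2 * a)⁻¹ * (2 * f t * f' t * exp (-f t ^ 2))
      = f t / a * (f' t * exp (-f t ^ 2)) by field_simp]
    exact le_mul_of_one_le_left (by positivity) ((one_le_div ha).2 hft)
  have hle_ae : ∀ᵐ t ∂volume.restrict (Ioi R), _ := (ae_restrict_mem measurableSet_Ioi).mono hle
  have hnonneg : 0 ≤ᵐ[volume.restrict (Ioi R)] fun t => f' t * exp (-f t ^ 2) :=
    (ae_restrict_mem measurableSet_Ioi).mono fun t ht => by have := hf' t ht; positivity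
  refine ⟨?_, ?_⟩
  · refine (hint.const_mul (2 * a)⁻¹).mono' (aestronglyMeasurable_deriv_mul_exp_neg_sq hf) ?_
    filter_upwards [hle_ae, hnonneg] with t ht h0
    rwa [norm_of_nonneg h0]
  · calc ∫ t in Ioi R, f' t * exp (-f t ^ 2)
        ≤ ∫ t in Ioi R, (2 * a)⁻¹ * (2 * f t * f' t * exp (-f t ^ 2)) :=
          integral_mono_of_nonneg hnonneg (hint.const_mul _) hle_ae
      _ = (2 * a)⁻¹ * exp (-f R ^ 2) := by rw [integral_const_mul, hval]
      _ ≤ exp (-a ^ 2) / (2 * a) := by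
          rw [inv_mul_eq_div]
          gcongr
          exact hfa R self_mem_Ici

end GaussianTail

noncomputable def tailVar (ρ t : ℝ) : ℝ := √t / 2 - ρ / (2 * √t)

theorem hasDerivAt_tailVar (ρ : ℝ) {t : ℝ} (ht : 0 < t) :
    HasDerivAt (tailVar ρ) ((1 + ρ / t) / (4 * √t)) t := by
  have hs := hasDerivAt_sqrt ht.ne'
  have hst : √t ≠ 0 := (sqrt_pos.2 ht).ne'
  refine ((hs.div_const 2).sub ((hasDerivAt_const t ρ).div (hs.const_mul 2) ?_)).congr_deriv ?_
  · positivity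
  · field_simp
    rw [sq_sqrt ht.le]
    ring

theorem tendsto_tailVar_atTop (ρ : ℝ) : Tendsto (tailVar ρ) atTop atTop := by
  have h2 : Tendsto (fun t => 2 * √t) atTop atTop :=
    tendsto_sqrt_atTop.const_mul_atTop two_pos
  exact (tendsto_sqrt_atTop.atTop_div_const two_pos).atTop_add
    (tendsto_const_nhds.div_atTop h2).neg |>.congr fun t => (sub_eq_add_neg _ _).symm

theorem tailVar_le_tailVar {ρ ρ' R t : ℝ} (hρ : 0 ≤ ρ) (hρρ' : ρ ≤ ρ') (hR : 0 < R)
    (hRt : R ≤ t) : tailVar ρ' R ≤ tailVar ρ t := by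
  have hsR : 0 < √R := sqrt_pos.2 hR
  have hsRt : √R ≤ √t := sqrt_le_sqrt hRt
  have h1 : ρ / (2 * √t) ≤ ρ / (2 * √R) := by gcongr
  have h2 : ρ / (2 * √R) ≤ ρ' / (2 * √R) := by gcongr
  unfold tailVar
  linarith

theorem tailVar_sub_sqrt_mul_log {R : ℝ} (hR : 0 < R) :
    tailVar (R - √(2 * R * log R)) R = √(log R / 2) := by
  have hsR : 0 < √R := sqrt_pos.2 hR
  have h : √(2 * R * log R) = √R * (2 * √(log R / 2)) := by
    rw [show 2 * R * log R = R * (4 * (log R / 2)) by ring, sqrt_mul hR.le,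
      sqrt_mul (by norm_num), show (4 : ℝ) = 2 ^ 2 by norm_num, sqrt_sq (by norm_num)]
  unfold tailVar
  rw [h]
  field_simp
  rw [sq_sqrt hR.le]
  ring

theorem exp_neg_log_div_two {R : ℝ} (hR : 0 < R) : exp (-(log R / 2)) = 1 / √R := by
  rw [← log_sqrt hR.le, exp_neg, exp_log (sqrt_pos.2 hR), one_div]

theorem sqrt_two_mul_mul_log_sq_div {R : ℝ} (hR : 1 ≤ R) :
    √(2 * R * log R) ^ 2 / (4 * R) = log R / 2 := by
  have := log_nonneg hR
  rw [sq_sqrt (by positivity)]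
  field_simp
  ring

theorem integral_Ioi_inv_sqrt_mul_exp_neg_tailVar_sq_le {ρ R a : ℝ} (hρ : 0 ≤ ρ) (hR : 0 < R)
    (ha : 0 < a) (hw : ∀ t ∈ Ici R, a ≤ tailVar ρ t) :
    ∫ t in Ioi R, 1 / √t * exp (-tailVar ρ t ^ 2) ≤ 2 / a * exp (-a ^ 2) := by
  obtain ⟨hint, hbound⟩ := integrableOn_and_integral_Ioi_deriv_mul_exp_neg_sq_le ha
    (fun t ht => hasDerivAt_tailVar ρ (hR.trans_le ht))
    (fun t ht => by have := hR.trans ht; positivity) hw (tendsto_tailVar_atTop ρ)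
  have hpointwise : ∀ t ∈ Ioi R, 1 / √t * exp (-tailVar ρ t ^ 2)
      ≤ 4 * ((1 + ρ / t) / (4 * √t) * exp (-tailVar ρ t ^ 2)) := fun t ht => by
    have ht0 : 0 < t := hR.trans ht
    have : 0 ≤ ρ / t := by positivity
    have hsimp : 4 * ((1 + ρ / t) / (4 * √t)) = (1 + ρ / t) / √t := by field_simp
    rw [← mul_assoc, hsimp]
    gcongr
    linarith
  calc ∫ t in Ioi R, 1 / √t * exp (-tailVar ρ t ^ 2)
      ≤ ∫ t in Ioi R, 4 * ((1 + ρ / t) / (4 * √t) * exp (-tailVar ρ t ^ 2)) :=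
        integral_mono_of_nonneg (Eventually.of_forall fun t => by positivity)
          (hint.const_mul 4) ((ae_restrict_mem measurableSet_Ioi).mono hpointwise)
    _ ≤ 4 * (exp (-a ^ 2) / (2 * a)) := by rw [integral_const_mul]; gcongr
    _ = 2 / a * exp (-a ^ 2) := by field_simp; ring

/-- Gaussian tail estimate in Lemma 7.5: there is `C > 0` such that for every
`R ≥ 3`, with `R′ = R − √(2R log R)`, and every `0 ≤ ρ ≤ R′`,
`∫_R^∞ t^{−1/2}·exp(−(√t/2 − ρ/(2√t))²) dt ≤ C·(log R)^{−1/2}·exp(−(R−R′)²/(4R))`, and the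
right-hand side equals `C·R^{−1/2}·(log R)^{−1/2}`. -/
theorem gaussian_tail_estimate : ∃ C > 0, ∀ R : ℝ, 3 ≤ R →
    ∀ R' : ℝ, R' = R - Real.sqrt (2 * R * Real.log R) →
    ∀ ρ : ℝ, 0 ≤ ρ → ρ ≤ R' →
    (∫ t in Set.Ioi R,
        (1 / Real.sqrt t) * Real.exp (-(Real.sqrt t / 2 - ρ / (2 * Real.sqrt t)) ^ 2))
      ≤ C / Real.sqrt (Real.log R) * Real.exp (-(R - R') ^ 2 / (4 * R)) ∧
    C / Real.sqrt (Real.log R) * Real.exp (-(R - R') ^ 2 / (4 * R))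
      = C / Real.sqrt R / Real.sqrt (Real.log R) := by
  refine ⟨2 * √2, by positivity, fun R hR R' hR' ρ hρ hρR' => ?_⟩
  have hR0 : 0 < R := by linarith
  have hlog : 0 < log R := log_pos (by linarith)
  set a := √(log R / 2)
  have ha : 0 < a := sqrt_pos.2 (by positivity)
  have hexponent : -(R - R') ^ 2 / (4 * R) = -(log R / 2) := by
    rw [hR', sub_sub_cancel, neg_div, sqrt_two_mul_mul_log_sq_div (by linarith)]
  have hw : ∀ t ∈ Ici R, a ≤ tailVar ρ t := fun t ht => by
    simpa only [hR', tailVar_sub_sqrt_mul_log hR0] using tailVar_le_tailVar hρ hρR' hR0 ht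
  have hconst : 2 / a = 2 * √2 / √(log R) := by
    rw [show a = √(log R) / √2 from sqrt_div' _ zero_le_two]
    field_simp
  have hbound := integral_Ioi_inv_sqrt_mul_exp_neg_tailVar_sq_le hρ hR0 ha hw
  rw [sq_sqrt (by positivity), hconst, exp_neg_log_div_two hR0] at hbound
  rw [hexponent, exp_neg_log_div_two hR0]
  exact ⟨hbound, by ring⟩
end
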